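/- The diagonal Gram coefficients can be computed by the recurrence a_{0,0} = (2T)^{−1/2} and a_{m+1, m+1} = ((2m+1)/(2m+2)) · a_{m,m} for all m ≥ 0. -/

import Mathlib

open Real MeasureTheory Matrix Filter

/-- Physicists' Hermite polynomials: H_0 = 1, H_1 = 2x, H_{n+1} = 2x H_n - 2n H_{n-1}. -/
noncomputable def hermiteH : ℕ → ℝ → ℝ
  | 0, _ => 1
  | 1, x => 2 * x
  | (n + 2), x => 2 * x * hermiteH (n + 1) x - 2 * (n + 1) * hermiteH n x

/-- Asymmetric Hermite basis function ψ_m. -/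
noncomputable def psi (T : ℝ) (m : ℕ) (v : ℝ) : ℝ :=
  Real.exp (-v ^ 2 / T) * T ^ (-(1 : ℝ) / 2) *
    ((2 : ℝ) ^ m * (Nat.factorial m : ℝ) * Real.sqrt π) ^ (-(1 : ℝ) / 2) *
    hermiteH m (v / Real.sqrt T)

/-- Gram coefficient a_{m,n} = ∫ ψ_m ψ_n. -/
noncomputable def gramA (T : ℝ) (m n : ℕ) : ℝ := ∫ v : ℝ, psi T m v * psi T n v

/-!
Write `f m x = H_m(x) e^{-x²}`. The substitution `v = √T x` gives
`a_{m,m} = ‖f m‖₂² / (√T · 2^m m! √π)`, and `‖f 0‖₂² = √(π/2)` is a Gaussian integral, so it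
suffices to show `‖f (m+1)‖₂² = (2m+1) ‖f m‖₂²`. Since `(f m)' = -f (m+1)` and
`f (m+2) = 2x f (m+1) - 2(m+1) f m`, one integration by parts gives
`‖f (m+1)‖₂² = -∫ f (m+2) f m = 2(m+1) ‖f m‖₂² - ∫ 2x f (m+1) f m`, and a second one,
`∫ x (f m ^ 2)' = -‖f m‖₂²`, identifies the last integral with `‖f m‖₂²`.
-/

open Polynomial

lemma integrable_pow_mul_exp_neg_mul_sq {b : ℝ} (hb : 0 < b) (n : ℕ) :
    Integrable fun x : ℝ => x ^ n * exp (-b * x ^ 2) := by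
  simpa [rpow_natCast] using
    integrable_rpow_mul_exp_neg_mul_sq hb (s := n) (by linarith [n.cast_nonneg (α := ℝ)])

lemma integrable_eval_mul_exp_neg_mul_sq {b : ℝ} (hb : 0 < b) (p : ℝ[X]) :
    Integrable fun x : ℝ => p.eval x * exp (-b * x ^ 2) := by
  induction p using Polynomial.induction_on' with
  | add p q hp hq => exact (hp.add hq).congr (ae_of_all _ fun x => by simp [add_mul])
  | monomial n a => simpa [mul_assoc] using (integrable_pow_mul_exp_neg_mul_sq hb n).const_mul a

lemma hermiteH_add_two (n : ℕ) (x : ℝ) :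
    hermiteH (n + 2) x = 2 * x * hermiteH (n + 1) x - 2 * (n + 1) * hermiteH n x := rfl

lemma exists_eval_eq_hermiteH (n : ℕ) : ∃ p : ℝ[X], ∀ x, p.eval x = hermiteH n x := by
  induction n using Nat.twoStepInduction with
  | zero => exact ⟨1, by simp [hermiteH]⟩
  | one => exact ⟨C 2 * X, by simp [hermiteH]⟩
  | more n ih₀ ih₁ =>
    obtain ⟨p, hp⟩ := ih₀
    obtain ⟨q, hq⟩ := ih₁
    exact ⟨C 2 * X * q - C (2 * ((n : ℝ) + 1)) * p, by simp [hermiteH, hp, hq]⟩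

lemma hasDerivAt_hermiteH (n : ℕ) (x : ℝ) :
    HasDerivAt (hermiteH n) (2 * x * hermiteH n x - hermiteH (n + 1) x) x := by
  induction n using Nat.twoStepInduction with
  | zero => simpa [hermiteH] using hasDerivAt_const x (1 : ℝ)
  | one =>
    refine ((hasDerivAt_id' x).const_mul (2 : ℝ)).congr_deriv ?_
    simp [hermiteH]
  | more n ih₀ ih₁ =>
    refine ((((hasDerivAt_id' x).const_mul 2).mul ih₁).sub
      (ih₀.const_mul (2 * ((n : ℝ) + 1)))).congr_deriv ?_
    rw [hermiteH_add_two (n + 1), hermiteH_add_two n]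
    push_cast; ring

noncomputable def hermiteFun (n : ℕ) (x : ℝ) : ℝ := hermiteH n x * exp (-x ^ 2)

lemma hasDerivAt_hermiteFun (n : ℕ) (x : ℝ) :
    HasDerivAt (hermiteFun n) (-hermiteFun (n + 1) x) x := by
  have hexp : HasDerivAt (fun y => exp (-y ^ 2)) (exp (-x ^ 2) * (-2 * x)) x := by
    simpa using ((hasDerivAt_pow 2 x).neg).exp
  refine ((hasDerivAt_hermiteH n x).mul hexp).congr_deriv ?_
  simp only [hermiteFun]; ring

lemma hermiteFun_add_two (n : ℕ) (x : ℝ) :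
    hermiteFun (n + 2) x = 2 * x * hermiteFun (n + 1) x - 2 * (n + 1) * hermiteFun n x := by
  simp only [hermiteFun, hermiteH]; ring

lemma integrable_eval_mul_hermiteFun_mul_hermiteFun (p : ℝ[X]) (m n : ℕ) :
    Integrable fun x => p.eval x * (hermiteFun m x * hermiteFun n x) := by
  obtain ⟨q, hq⟩ := exists_eval_eq_hermiteH m
  obtain ⟨r, hr⟩ := exists_eval_eq_hermiteH n
  convert integrable_eval_mul_exp_neg_mul_sq two_pos (p * q * r) using 2 with x
  simp only [hermiteFun, eval_mul, hq, hr]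
  rw [show -2 * x ^ 2 = -x ^ 2 + -x ^ 2 by ring, exp_add]
  ring

lemma integrable_hermiteFun_mul_hermiteFun (m n : ℕ) :
    Integrable fun x => hermiteFun m x * hermiteFun n x := by
  simpa using integrable_eval_mul_hermiteFun_mul_hermiteFun 1 m n

lemma integrable_id_mul_hermiteFun_mul_hermiteFun (m n : ℕ) :
    Integrable fun x => x * (hermiteFun m x * hermiteFun n x) := by
  simpa using integrable_eval_mul_hermiteFun_mul_hermiteFun X m n

lemma integral_hermiteFun_add_one_sq (m : ℕ) :
    ∫ x, hermiteFun (m + 1) x ^ 2 = (2 * m + 1) * ∫ x, hermiteFun m x ^ 2 := by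
  have shift : ∫ x, hermiteFun (m + 1) x ^ 2 = -∫ x, hermiteFun (m + 2) x * hermiteFun m x := by
    have := integral_mul_deriv_eq_deriv_mul_of_integrable
      (fun x _ => hasDerivAt_hermiteFun (m + 1) x) (fun x _ => hasDerivAt_hermiteFun m x)
      (by simpa [Pi.mul_def] using integrable_hermiteFun_mul_hermiteFun (m + 1) (m + 1))
      (by simpa [Pi.mul_def] using integrable_hermiteFun_mul_hermiteFun (m + 2) m)
      (integrable_hermiteFun_mul_hermiteFun (m + 1) m)
    simp only [mul_neg, neg_mul, integral_neg, neg_neg, ← sq] at this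
    rw [← this, neg_neg]
  have virial :
      ∫ x, 2 * x * (hermiteFun (m + 1) x * hermiteFun m x) = ∫ x, hermiteFun m x ^ 2 := by
    have hv (x : ℝ) : HasDerivAt (fun y => hermiteFun m y ^ 2)
        (-2 * (hermiteFun (m + 1) x * hermiteFun m x)) x :=
      ((hasDerivAt_hermiteFun m x).pow 2).congr_deriv (by push_cast; ring)
    have := integral_mul_deriv_eq_deriv_mul_of_integrable
      (fun x _ => hasDerivAt_id x) (fun x _ => hv x)
      (((integrable_id_mul_hermiteFun_mul_hermiteFun (m + 1) m).const_mul (-2)).congr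
        (ae_of_all _ fun x => by simp only [Pi.mul_apply, id]; ring))
      (by simpa [Pi.mul_def, sq] using integrable_hermiteFun_mul_hermiteFun m m)
      (by simpa [Pi.mul_def, sq] using integrable_id_mul_hermiteFun_mul_hermiteFun m m)
    simp only [id, one_mul] at this
    rw [← neg_neg (∫ x, hermiteFun m x ^ 2), ← this, ← integral_neg]
    congr 1; funext x; ring
  have recurrence : ∫ x, hermiteFun (m + 2) x * hermiteFun m x
      = (∫ x, 2 * x * (hermiteFun (m + 1) x * hermiteFun m x))
        - 2 * (m + 1) * ∫ x, hermiteFun m x ^ 2 := by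
    rw [← integral_const_mul, ← integral_sub]
    · congr 1; funext x; rw [hermiteFun_add_two]; ring
    · exact ((integrable_id_mul_hermiteFun_mul_hermiteFun (m + 1) m).const_mul 2).congr
        (ae_of_all _ fun x => by ring)
    · exact ((integrable_hermiteFun_mul_hermiteFun m m).const_mul (2 * (m + 1))).congr
        (ae_of_all _ fun x => by ring)
  rw [shift, recurrence, virial]
  ring

lemma rpow_neg_one_div_two_eq_inv_sqrt {x : ℝ} (hx : 0 ≤ x) : x ^ (-(1 : ℝ) / 2) = (√x)⁻¹ := by
  rw [neg_div, rpow_neg hx, sqrt_eq_rpow]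

lemma psi_eq_hermiteFun {T : ℝ} (hT : 0 < T) (m : ℕ) (v : ℝ) :
    psi T m v = (√T * √(2 ^ m * m.factorial * √π))⁻¹ * hermiteFun m (v / √T) := by
  have hexp : -v ^ 2 / T = -(v / √T) ^ 2 := by rw [div_pow, sq_sqrt hT.le, neg_div]
  rw [psi, hermiteFun, hexp, rpow_neg_one_div_two_eq_inv_sqrt hT.le,
    rpow_neg_one_div_two_eq_inv_sqrt (by positivity), mul_inv]
  ring

lemma gramA_self_eq {T : ℝ} (hT : 0 < T) (m : ℕ) :
    gramA T m m = (√T * (2 ^ m * m.factorial * √π))⁻¹ * ∫ x, hermiteFun m x ^ 2 := by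
  set c : ℝ := 2 ^ m * m.factorial * √π
  have hsq (v : ℝ) :
      psi T m v * psi T m v = ((√T * √c) ^ 2)⁻¹ * hermiteFun m (v / √T) ^ 2 := by
    rw [psi_eq_hermiteFun hT]; ring
  have hnorm : (√T * √c) ^ 2 = T * c := by
    rw [mul_pow, sq_sqrt hT.le, sq_sqrt (by positivity)]
  rw [gramA]
  simp_rw [hsq, hnorm]
  rw [integral_const_mul, Measure.integral_comp_div (fun x => hermiteFun m x ^ 2),
    abs_of_pos (sqrt_pos.2 hT), smul_eq_mul]
  field_simp
  rw [sq_sqrt hT.le]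

lemma integral_hermiteFun_zero_sq : ∫ x, hermiteFun 0 x ^ 2 = √(π / 2) := by
  rw [← integral_gaussian 2]
  congr 1; funext x
  rw [hermiteFun, hermiteH, one_mul, ← exp_nat_mul]
  ring_nf

theorem gramA_diag_recurrence (T : ℝ) (hT : 0 < T) :
    gramA T 0 0 = (2 * T) ^ (-(1 : ℝ) / 2) ∧
    ∀ m : ℕ, gramA T (m + 1) (m + 1) =
      ((2 * (m : ℝ) + 1) / (2 * (m : ℝ) + 2)) * gramA T m m := by
  refine ⟨?_, fun m => ?_⟩
  · rw [gramA_self_eq hT, integral_hermiteFun_zero_sq,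
      rpow_neg_one_div_two_eq_inv_sqrt (by positivity), sqrt_div' _ zero_le_two,
      sqrt_mul zero_le_two, Nat.factorial_zero, Nat.cast_one]
    field_simp
  · rw [gramA_self_eq hT, gramA_self_eq hT, integral_hermiteFun_add_one_sq, Nat.factorial_succ]
    push_cast
    field_simp
    ring
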